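/- For m ≥ 0 with |𝒫_m| > 0 and k ∈ {0,…,|𝒫_m|−1}, the time χ(m,k) = inf{j ≥ m+1 : S(j) = S(m+1) − k} satisfies 𝓗(χ(m,k)) = 𝓗(m) + 1, where 𝓗(n) = #{j ∈ {0,…,n−1} : S(j+1) ≤ min_{j+1 ≤ i ≤ n} S(i)} is the discrete height process. -/

import Mathlib

open scoped Classical NNReal
noncomputable section

/-- Finite point measures on `(0,∞)`, modeled as multisets of atoms in `ℝ≥0`. -/
abbrev PtM := Multiset ℝ≥0

/-- A stick: a life-length together with a finite point measure of birth times. -/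
abbrev Stick := ℝ≥0 × PtM

/-- The space of doubly infinite sequences of sticks. -/
abbrev Om := ℤ → Stick

/-- The shift operator `θ_n`. -/
def theta (n : ℤ) (ω : Om) : Om := fun k => ω (n + k)

/-- The dual (time-reversal) operator `ϑ^n`. -/
def dual (n : ℤ) (ω : Om) : Om := fun k => ω (n - k - 1)

/-- Life length of the `k`-th individual. -/
def Vc (ω : Om) (k : ℤ) : ℝ≥0 := (ω k).1

/-- Point measure (ages at childbearing) of the `k`-th individual. -/
def Pc (ω : Om) (k : ℤ) : PtM := (ω k).2

/-- The Lukasiewicz path `S`. -/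
def Sw (ω : Om) (n : ℤ) : ℤ :=
  if 0 ≤ n then ∑ k ∈ Finset.range n.toNat, ((Multiset.card (Pc ω (k : ℤ)) : ℤ) - 1)
  else - ∑ k ∈ Finset.range (-n).toNat, ((Multiset.card (Pc ω (-(k : ℤ) - 1)) : ℤ) - 1)

/-- `π(ν)`: the supremum of the support (largest atom) of a finite point measure. -/
def piM (ν : PtM) : ℝ≥0 := ν.sup

/-- `Υ_j(ν)`: removes the `j` largest atoms of `ν`. -/
def upsilon (j : ℕ) (ν : PtM) : PtM :=
  ((ν.sort (· ≤ ·)).take (Multiset.card ν - j) : List ℝ≥0)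

/-- The map `Φ` driving the spine process dynamics. -/
def phiSp (Y : List PtM) (ν : PtM) : List PtM :=
  if ν = 0 then
    match Y.reverse.dropWhile (fun m => decide (Multiset.card m < 2)) with
    | [] => []
    | h :: t => (upsilon 1 h :: t).reverse
  else Y ++ [ν]

/-- The spine process `𝕊₀ⁿ`. -/
def spine (ω : Om) : ℕ → List PtM
  | 0 => []
  | n + 1 => phiSp (spine ω n) (Pc ω (n : ℤ))

/-- `π` extended to finite sequences of point measures. -/
def piL (Y : List PtM) : ℝ≥0 := (Y.map piM).sum

/-- The chronological height process `ℍ(n) = π(𝕊₀ⁿ)`. -/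
def Hchr (ω : Om) (n : ℕ) : ℝ≥0 := piL (spine ω n)

/-- The genealogical height process
`𝓗(n) = #{k ∈ {0,…,n−1} : S(k+1) ≤ min_{k+1 ≤ j ≤ n} S(j)}`. -/
def genH (ω : Om) (n : ℕ) : ℕ :=
  ((Finset.range n).filter
    (fun k : ℕ => ∀ j : ℕ, j ∈ Finset.Icc (k + 1) n → Sw ω ((k : ℤ) + 1) ≤ Sw ω (j : ℤ))).card

/-- Weak ascending ladder height times `T(k)` (valued `⊤` if nonexistent). -/
def ladderT (ω : Om) : ℕ → ℕ∞
  | 0 => 0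
  | k + 1 => sInf {x : ℕ∞ | ∃ m j : ℕ, x = (m : ℕ∞) ∧ ladderT ω k = (j : ℕ∞) ∧
      j < m ∧ Sw ω (j : ℤ) ≤ Sw ω (m : ℤ)}

/-- `T^{-1}(n) = min{k ≥ 0 : T(k) ≥ n}`. -/
def Tinv (ω : Om) (n : ℕ) : ℕ := sInf {k : ℕ | (n : ℕ∞) ≤ ladderT ω k}

/-- `T̃^{-1}(n) = max{k ≥ 0 : T(k) ≤ n}`. -/
def tildeTinv (ω : Om) (n : ℕ) : ℕ := sSup {k : ℕ | ladderT ω k ≤ (n : ℕ∞)}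

/-- First passage time upward `τ_ℓ = inf{k > 0 : S(k) ≥ ℓ}`. -/
def tauUp (ω : Om) (ℓ : ℤ) : ℕ∞ :=
  sInf {x : ℕ∞ | ∃ k : ℕ, x = (k : ℕ∞) ∧ 0 < k ∧ ℓ ≤ Sw ω (k : ℤ)}

/-- First hitting time downward `τ⁻_ℓ = inf{k ≥ 0 : S(k) = −ℓ}`. -/
def tauDown (ω : Om) (ℓ : ℤ) : ℕ∞ :=
  sInf {x : ℕ∞ | ∃ k : ℕ, x = (k : ℕ∞) ∧ Sw ω (k : ℤ) = -ℓ}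

/-- `τ_ℓ` as a natural number (junk value `0` when infinite). -/
def tauUpN (ω : Om) (ℓ : ℤ) : ℕ := (tauUp ω ℓ).toNat

/-- The undershoot `ζ_ℓ = ℓ − S(τ_ℓ − 1)`. -/
def zetaU (ω : Om) (ℓ : ℤ) : ℤ := ℓ - Sw ω ((tauUpN ω ℓ : ℤ) - 1)

/-- `μ_ℓ = Υ_{ζ_ℓ}(𝒫_{τ_ℓ − 1})`. -/
def muU (ω : Om) (ℓ : ℤ) : PtM := upsilon (zetaU ω ℓ).toNat (Pc ω ((tauUpN ω ℓ : ℤ) - 1))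

/-- `𝒬(k) = μ₀ ∘ θ_{T(k−1)}`. -/
def Qcal (ω : Om) (k : ℕ) : PtM := muU (theta ((ladderT ω (k - 1)).toNat : ℤ) ω) 0

/-- `𝕐(k) = π(𝒬(k))`. -/
def Ybb (ω : Om) (k : ℕ) : ℝ≥0 := piM (Qcal ω k)

/-- The backward maximum `L(m) = max_{0 ≤ k ≤ m} S(−k)`. -/
def Lmax (ω : Om) (m : ℕ) : ℤ :=
  Finset.sup' (Finset.range (m + 1)) Finset.nonempty_range_add_one (fun k => Sw ω (-(k : ℤ)))

/-- The ancestor set `𝒜(n) = {n − T(k)∘ϑ^n : k ≥ 0}` (only finite ladder times). -/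
def Aset (ω : Om) (n : ℕ) : Set ℤ :=
  {a | ∃ k j : ℕ, ladderT (dual (n : ℤ) ω) k = (j : ℕ∞) ∧ a = (n : ℤ) - (j : ℤ)}

/-- `mrca(m,n) = max(𝒜(m) ∩ 𝒜(n))`. -/
def mrcaZ (ω : Om) (m n : ℕ) : ℤ := sSup (Aset ω m ∩ Aset ω n)

/-- `χ(m,k) = inf{j ≥ m+1 : S(j) = S(m+1) − k}`. -/
def chiT (ω : Om) (m k : ℕ) : ℕ∞ :=
  sInf {x : ℕ∞ | ∃ j : ℕ, x = (j : ℕ∞) ∧ m + 1 ≤ j ∧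
    Sw ω (j : ℤ) = Sw ω ((m : ℤ) + 1) - (k : ℤ)}

/-- `χ(m) = inf{j ≥ m+1 : S(j) = S(m) − 1}`. -/
def chiF (ω : Om) (m : ℕ) : ℕ∞ :=
  sInf {x : ℕ∞ | ∃ j : ℕ, x = (j : ℕ∞) ∧ m + 1 ≤ j ∧ Sw ω (j : ℤ) = Sw ω (m : ℤ) - 1}

/-- The functional `D_ℓ(𝕊₀^m)` of the spine, expressed through the dual walk:
`D_ℓ = (Σ_{i : 0 < T(i) ≤ min(τ_ℓ, m)} 𝕐(i) − 1_{τ_ℓ ≤ m} π(μ_ℓ)) ∘ ϑ^m`, with `D_0 ≡ 0`. -/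
def Dfun (ω : Om) (m : ℕ) (ℓ : ℤ) : ℝ :=
  if ℓ < 1 then 0 else
    (∑ i ∈ (Finset.Icc 1 m).filter
        (fun i => 0 < ladderT (dual (m : ℤ) ω) i ∧
          ladderT (dual (m : ℤ) ω) i ≤ min (tauUp (dual (m : ℤ) ω) ℓ) (m : ℕ∞)),
      (Ybb (dual (m : ℤ) ω) i : ℝ))
    - (if tauUp (dual (m : ℤ) ω) ℓ ≤ (m : ℕ∞) then (piM (muU (dual (m : ℤ) ω) ℓ) : ℝ) else 0)

/-- `K_j = 2𝒱(j−1) − ℍ(j)`. -/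
def Kt (ω : Om) (j : ℕ) : ℝ := 2 * ∑ k ∈ Finset.range j, (Vc ω (k : ℤ) : ℝ) - (Hchr ω j : ℝ)

/-- The chronological contour process: on `[K_n, K_{n+1}]` it increases at rate `+1` from
`ℍ(n)` up to `ℍ(n) + V_n` and then decreases at rate `−1` down to `ℍ(n+1)`. -/
def contour (ω : Om) (t : ℝ) : ℝ :=
  let n := sSup {j : ℕ | Kt ω j ≤ t}
  min ((Hchr ω n : ℝ) + (t - Kt ω n)) ((Hchr ω (n + 1) : ℝ) + (Kt ω (n + 1) - t))



/-!
Since `S(m+1) = S(m) + |𝒫_m| - 1` and `k < |𝒫_m|`, the target level `S(m+1) - k` lies in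
`[S(m), S(m+1)]`. The walk has no downward jump below `-1`, so it stays strictly above that level
on `(m, χ(m,k))`. Hence every `q ∈ [m, χ - 1)` has `S(q+1) > S(χ)` and is not an ancestor of `χ`,
an ancestor `q < m` of `m` stays one of `χ` because `S(χ) ≥ S(m)`, and `χ - 1` is an ancestor
of `χ`: the ancestors of `χ` are those of `m` together with `χ - 1`.
-/

theorem ENat.sInf_setOf_natCast_eq {p : ℕ → Prop} {c : ℕ}
    (h : sInf {x : ℕ∞ | ∃ j : ℕ, x = (j : ℕ∞) ∧ p j} = (c : ℕ∞)) :
    p c ∧ ∀ j, p j → c ≤ j := by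
  set s := {x : ℕ∞ | ∃ j : ℕ, x = (j : ℕ∞) ∧ p j}
  have hs : s.Nonempty := by
    by_contra hs
    rw [Set.not_nonempty_iff_eq_empty.mp hs, sInf_empty] at h
    exact ENat.top_ne_natCast c h
  obtain ⟨j, hj, hpj⟩ := csInf_mem hs
  obtain rfl : j = c := by exact_mod_cast hj.symm.trans h
  refine ⟨hpj, fun i hi => ?_⟩
  have hle : sInf s ≤ (i : ℕ∞) := sInf_le ⟨i, rfl, hi⟩
  rw [h] at hle
  exact_mod_cast hle

theorem chiT_spec {ω : Om} {m k c : ℕ} (hc : chiT ω m k = (c : ℕ∞)) :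
    (m + 1 ≤ c ∧ Sw ω c = Sw ω ((m : ℤ) + 1) - k) ∧
      ∀ j : ℕ, m + 1 ≤ j → Sw ω j = Sw ω ((m : ℤ) + 1) - k → c ≤ j := by
  obtain ⟨hcp, hmin⟩ := ENat.sInf_setOf_natCast_eq hc
  exact ⟨hcp, fun j hj hSj => hmin j ⟨hj, hSj⟩⟩

theorem Sw_natCast (ω : Om) (n : ℕ) :
    Sw ω n = ∑ i ∈ Finset.range n, ((Multiset.card (Pc ω i) : ℤ) - 1) := by
  simp [Sw]

theorem Sw_natCast_succ (ω : Om) (n : ℕ) :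
    Sw ω ((n + 1 : ℕ) : ℤ) = Sw ω n + ((Multiset.card (Pc ω n) : ℤ) - 1) := by
  rw [Sw_natCast, Sw_natCast, Finset.sum_range_succ]

theorem Sw_natCast_sub_one_le (ω : Om) (n : ℕ) : Sw ω n - 1 ≤ Sw ω ((n + 1 : ℕ) : ℤ) := by
  rw [Sw_natCast_succ]
  omega

theorem lt_of_forall_ne_of_sub_one_le {f : ℕ → ℤ} (hf : ∀ n, f n - 1 ≤ f (n + 1))
    {a b : ℕ} {L : ℤ} (hab : a ≤ b) (ha : L ≤ f a) (hne : ∀ i, a ≤ i → i ≤ b → f i ≠ L) :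
    L < f b := by
  induction b, hab using Nat.le_induction with
  | base => exact lt_of_le_of_ne ha (hne a le_rfl le_rfl).symm
  | succ n hn ih =>
    have hlt := ih fun i hai hin => hne i hai (by omega)
    exact lt_of_le_of_ne (by linarith [hf n]) (hne (n + 1) (by omega) le_rfl).symm

def genAncestors (ω : Om) (n : ℕ) : Finset ℕ :=
  (Finset.range n).filter
    (fun k : ℕ => ∀ j : ℕ, j ∈ Finset.Icc (k + 1) n → Sw ω ((k : ℤ) + 1) ≤ Sw ω (j : ℤ))

theorem genH_eq_card_genAncestors (ω : Om) (n : ℕ) : genH ω n = (genAncestors ω n).card := rfl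

theorem mem_genAncestors {ω : Om} {n q : ℕ} :
    q ∈ genAncestors ω n ↔ q < n ∧ ∀ j : ℕ, q + 1 ≤ j → j ≤ n → Sw ω ((q : ℤ) + 1) ≤ Sw ω j := by
  simp [genAncestors, and_imp]

theorem genAncestors_eq_insert_of_first_visit {ω : Om} {m c : ℕ} (hmc : m < c)
    (hm : Sw ω m ≤ Sw ω c) (hbetween : ∀ j : ℕ, m < j → j < c → Sw ω c < Sw ω j) :
    genAncestors ω c = insert (c - 1) (genAncestors ω m) := by
  ext q
  simp only [Finset.mem_insert, mem_genAncestors]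
  constructor
  · rintro ⟨hqc, hq⟩
    by_cases hqm : q < m
    · exact .inr ⟨hqm, fun j hqj hjm => hq j hqj (by omega)⟩
    · by_contra hne
      have hc := hq c (by omega) le_rfl
      have hq1 := hbetween (q + 1) (by omega) (by omega)
      push_cast at hq1
      omega
  · rintro (rfl | ⟨hqm, hq⟩)
    · refine ⟨by omega, fun j hqj hjc => ?_⟩
      rw [show j = c by omega, show ((c - 1 : ℕ) : ℤ) + 1 = c by omega]
    · refine ⟨by omega, fun j hqj hjc => ?_⟩
      by_cases hjm : j ≤ m
      · exact hq j hqj hjm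
      · have hqm' := hq m (by omega) le_rfl
        rcases eq_or_lt_of_le hjc with rfl | hjc
        · omega
        · linarith [hbetween j (by omega) hjc]

theorem genH_eq_add_one_of_first_visit {ω : Om} {m c : ℕ} (hmc : m < c)
    (hm : Sw ω m ≤ Sw ω c) (hbetween : ∀ j : ℕ, m < j → j < c → Sw ω c < Sw ω j) :
    genH ω c = genH ω m + 1 := by
  have hnotMem : c - 1 ∉ genAncestors ω m := fun h => by
    have := (mem_genAncestors.mp h).1
    omega
  rw [genH_eq_card_genAncestors, genH_eq_card_genAncestors,
    genAncestors_eq_insert_of_first_visit hmc hm hbetween, Finset.card_insert_of_notMem hnotMem]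

theorem stmt6_general (ω : Om) (m k c : ℕ)
    (hk : k < Multiset.card (Pc ω (m : ℤ))) (hc : chiT ω m k = (c : ℕ∞)) :
    genH ω c = genH ω m + 1 := by
  obtain ⟨⟨hmc, hSc⟩, hmin⟩ := chiT_spec hc
  have hstep := Sw_natCast_succ ω m
  push_cast at hstep
  refine genH_eq_add_one_of_first_visit hmc (by omega) fun j hmj hjc => ?_
  refine lt_of_forall_ne_of_sub_one_le (Sw_natCast_sub_one_le ω) hmj ?_ fun i hmi hij hi => ?_
  · push_cast
    omega
  · have := hmin i hmi (hi.trans hSc)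
    omega

theorem stmt6 (ω : Om) (m k c : ℕ) (hP : 0 < Multiset.card (Pc ω (m : ℤ)))
    (hk : k < Multiset.card (Pc ω (m : ℤ))) (hc : chiT ω m k = (c : ℕ∞)) :
    genH ω c = genH ω m + 1 :=
  stmt6_general ω m k c hk hc

end
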